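/- Let Z = ∑_{j=1}^m ∏_{k≠j} X_k − p_1 s_1 and V = p_1 ∑_{j=1}^m μ_j^{-1}Ẋ_j. Then E[Z V] = p_1²(s_1² − s_2). -/

import Mathlib

/-!
Expand `Z * V` into the terms `(∏_{k ≠ j} X_k) * Ẋ_l` and `Ẋ_l`. Under the product measure the
expectation of such a term factorizes over the coordinates. It vanishes when `Ẋ_l` is the only
factor in coordinate `l` (the constant part of `Z`, and `l = j`); for `l ≠ j` coordinate `l`
contributes `E[X_l Ẋ_l] = Var X_l = μ_l` and the others their means, giving `p_1 / μ_j`. Summing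
`p_1 μ_l⁻¹ · p_1 μ_j⁻¹` over `l ≠ j` gives `p_1² (s_1² - s_2)`. The Poisson moments come from the
factorial moments `E[X (X - 1) ⋯ (X - k + 1)] = r ^ k`.
-/

open MeasureTheory ProbabilityTheory Finset
open scoped NNReal

/-- The law of `m` independent Poisson random variables `X_j ~ Poisson (μ j)`,
as a product measure on `Fin m → ℕ`. -/
noncomputable def poissonPi {m : ℕ} (μ : Fin m → ℝ≥0) : Measure (Fin m → ℕ) :=
  Measure.pi fun j => poissonMeasure (μ j)

open Real
open scoped Nat

namespace ProbabilityTheory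

variable (r : ℝ≥0)

lemma descFactorial_mul_poisson_add (k n : ℕ) :
    ((n + k).descFactorial k : ℝ) * (exp (-r) * r ^ (n + k) / (n + k)!)
      = r ^ k * (exp (-r) * r ^ n / n !) := by
  have h : ((n + k).descFactorial k : ℝ) * n ! = (n + k)! := by
    rw [mul_comm]; exact_mod_cast Nat.add_sub_cancel n k ▸ Nat.factorial_mul_descFactorial (by omega)
  rw [← h]
  field_simp
  ring

lemma hasSum_descFactorial_mul_poisson (k : ℕ) :
    HasSum (fun n ↦ (n.descFactorial k : ℝ) * (exp (-r) * r ^ n / n !)) (r ^ k) := by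
  set f : ℕ → ℝ := fun n ↦ (n.descFactorial k : ℝ) * (exp (-r) * r ^ n / n !)
  have hshift : HasSum (fun n ↦ f (n + k)) (r ^ k) := by
    simpa [f, descFactorial_mul_poisson_add] using (hasSum_one_poissonMeasure r).mul_left ((r : ℝ) ^ k)
  have hlow : ∑ n ∈ range k, f n = 0 :=
    sum_eq_zero fun n hn ↦ by simp [f, Nat.descFactorial_eq_zero_iff_lt.2 (mem_range.1 hn)]
  simpa [hlow] using (hasSum_nat_add_iff k).1 hshift

lemma integrable_descFactorial_poissonMeasure (k : ℕ) :
    Integrable (fun n ↦ (n.descFactorial k : ℝ)) Po(r) := by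
  refine integrable_poissonMeasure_iff.2 ?_
  simpa [mul_comm] using (hasSum_descFactorial_mul_poisson r k).summable

lemma integral_descFactorial_poissonMeasure (k : ℕ) :
    ∫ n, (n.descFactorial k : ℝ) ∂Po(r) = r ^ k :=
  (hasSum_integral_poissonMeasure (integrable_descFactorial_poissonMeasure r k)).unique
    (by simpa [mul_comm] using hasSum_descFactorial_mul_poisson r k)

lemma integrable_cast_poissonMeasure : Integrable (fun n : ℕ ↦ (n : ℝ)) Po(r) := by
  simpa using integrable_descFactorial_poissonMeasure r 1

lemma integral_cast_poissonMeasure : ∫ n, (n : ℝ) ∂Po(r) = r := by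
  simpa using integral_descFactorial_poissonMeasure r 1

lemma integral_cast_sub_poissonMeasure : ∫ n, ((n : ℝ) - r) ∂Po(r) = 0 := by
  rw [integral_sub (integrable_cast_poissonMeasure r) (integrable_const _),
    integral_cast_poissonMeasure]
  simp

lemma cast_mul_cast_sub_eq_descFactorial (n : ℕ) :
    (n : ℝ) * (n - r) = n.descFactorial 2 + (1 - r) * n.descFactorial 1 := by
  rw [Nat.cast_descFactorial_two, Nat.descFactorial_one]
  ring

lemma integrable_cast_mul_cast_sub_poissonMeasure :
    Integrable (fun n : ℕ ↦ (n : ℝ) * (n - r)) Po(r) := by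
  simp_rw [cast_mul_cast_sub_eq_descFactorial]
  exact (integrable_descFactorial_poissonMeasure r 2).add
    ((integrable_descFactorial_poissonMeasure r 1).const_mul _)

lemma integral_cast_mul_cast_sub_poissonMeasure : ∫ n, (n : ℝ) * (n - r) ∂Po(r) = r := by
  simp_rw [cast_mul_cast_sub_eq_descFactorial]
  rw [integral_add (integrable_descFactorial_poissonMeasure r 2)
      ((integrable_descFactorial_poissonMeasure r 1).const_mul _),
    integral_const_mul, integral_descFactorial_poissonMeasure,
    integral_descFactorial_poissonMeasure]
  ring

end ProbabilityTheory

section PiProd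

variable {ι α : Type*} [Fintype ι] [DecidableEq ι] [MeasurableSpace α]
  {ν : ι → Measure α} [∀ i, IsProbabilityMeasure (ν i)] {s : Finset ι} {l : ι}

lemma prod_ite_mem_ite_eq_of_notMem {M : Type*} [CommMonoid M] (hl : l ∉ s) (F G : ι → M) :
    ∏ k, (if k ∈ s then F k else if k = l then G k else 1) = (∏ k ∈ s, F k) * G l := by
  rw [← prod_mul_prod_compl s, prod_ite_of_true fun k hk ↦ hk,
    prod_ite_of_false fun k hk ↦ mem_compl.1 hk, prod_ite_eq' sᶜ l G, if_pos (mem_compl.2 hl)]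

lemma integrable_pi_prod_mul_of_notMem (hl : l ∉ s) {f : ι → α → ℝ} {g : α → ℝ}
    (hf : ∀ k ∈ s, Integrable (f k) (ν k)) (hg : Integrable g (ν l)) :
    Integrable (fun x ↦ (∏ k ∈ s, f k (x k)) * g (x l)) (Measure.pi ν) := by
  have h := Integrable.fintype_prod_dep (μ := ν)
    (f := fun k a ↦ if k ∈ s then f k a else if k = l then g a else 1) fun k ↦ by
      split_ifs with hks hkl
      · exact hf k hks
      · exact hkl ▸ hg
      · exact integrable_const 1
  simpa only [prod_ite_mem_ite_eq_of_notMem hl (fun k ↦ f k _) (fun k ↦ g _)] using h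

lemma integral_pi_prod_mul_of_notMem (hl : l ∉ s) (f : ι → α → ℝ) (g : α → ℝ) :
    ∫ x, (∏ k ∈ s, f k (x k)) * g (x l) ∂Measure.pi ν
      = (∏ k ∈ s, ∫ a, f k a ∂ν k) * ∫ a, g a ∂ν l := by
  have h := integral_fintype_prod_eq_prod (μ := ν)
    (fun k a ↦ if k ∈ s then f k a else if k = l then g a else 1)
  simp only [prod_ite_mem_ite_eq_of_notMem hl (fun k ↦ f k _) (fun k ↦ g _)] at h
  rw [h, ← prod_ite_mem_ite_eq_of_notMem hl (fun k ↦ ∫ a, f k a ∂ν k) (fun k ↦ ∫ a, g a ∂ν k)]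
  refine prod_congr rfl fun k _ ↦ ?_
  split_ifs <;> simp

end PiProd

section PoissonPi

variable {m : ℕ} (μ : Fin m → ℝ≥0)

lemma prod_mul_cast_sub_eq_prod_erase_mul {s : Finset (Fin m)} {l : Fin m} (hl : l ∈ s)
    (x : Fin m → ℕ) :
    (∏ k ∈ s, (x k : ℝ)) * ((x l : ℝ) - μ l)
      = (∏ k ∈ s.erase l, (x k : ℝ)) * ((x l : ℝ) * ((x l : ℝ) - μ l)) := by
  rw [← mul_prod_erase s _ hl]
  ring

lemma integrable_poissonPi_prod_mul_cast_sub (s : Finset (Fin m)) (l : Fin m) :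
    Integrable (fun x ↦ (∏ k ∈ s, (x k : ℝ)) * ((x l : ℝ) - μ l)) (poissonPi μ) := by
  by_cases hl : l ∈ s
  · simp_rw [prod_mul_cast_sub_eq_prod_erase_mul μ hl]
    exact integrable_pi_prod_mul_of_notMem (notMem_erase l s)
      (fun k _ ↦ integrable_cast_poissonMeasure _)
      (integrable_cast_mul_cast_sub_poissonMeasure _)
  · exact integrable_pi_prod_mul_of_notMem hl (fun k _ ↦ integrable_cast_poissonMeasure _)
      ((integrable_cast_poissonMeasure _).sub (integrable_const _))

lemma integral_poissonPi_prod_mul_cast_sub (s : Finset (Fin m)) (l : Fin m) :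
    ∫ x, (∏ k ∈ s, (x k : ℝ)) * ((x l : ℝ) - μ l) ∂poissonPi μ
      = if l ∈ s then ∏ k ∈ s, (μ k : ℝ) else 0 := by
  by_cases hl : l ∈ s
  · simp_rw [prod_mul_cast_sub_eq_prod_erase_mul μ hl]
    rw [poissonPi, integral_pi_prod_mul_of_notMem (notMem_erase l s) (fun _ (n : ℕ) ↦ (n : ℝ))
        (fun (n : ℕ) ↦ (n : ℝ) * ((n : ℝ) - μ l)),
      integral_cast_mul_cast_sub_poissonMeasure, if_pos hl, ← mul_prod_erase s _ hl, mul_comm]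
    simp only [integral_cast_poissonMeasure]
  · rw [poissonPi, integral_pi_prod_mul_of_notMem hl (fun _ (n : ℕ) ↦ (n : ℝ)) (fun (n : ℕ) ↦ (n : ℝ) - μ l),
      integral_cast_sub_poissonMeasure, if_neg hl, mul_zero]

lemma integrable_poissonPi_cast_sub (l : Fin m) :
    Integrable (fun x ↦ (x l : ℝ) - μ l) (poissonPi μ) := by
  simpa using integrable_poissonPi_prod_mul_cast_sub μ ∅ l

lemma integral_poissonPi_cast_sub (l : Fin m) : ∫ x, ((x l : ℝ) - μ l) ∂poissonPi μ = 0 := by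
  simpa using integral_poissonPi_prod_mul_cast_sub μ ∅ l

end PoissonPi

lemma sum_sub_mul_mul_sum {ι R : Type*} [Fintype ι] [CommRing R] (a d w : ι → R) (c p : R) :
    (∑ j, a j - c) * (p * ∑ l, w l * d l)
      = ∑ j, ∑ l, p * w l * (a j * d l) - ∑ l, c * p * w l * d l := by
  rw [sub_mul, sum_mul, mul_sum, mul_sum]
  congr 1
  · exact sum_congr rfl fun _ _ ↦ by rw [mul_sum]; exact sum_congr rfl fun _ _ ↦ by ring
  · exact sum_congr rfl fun _ _ ↦ by ring

lemma sum_sum_erase_mul {ι R : Type*} [Fintype ι] [DecidableEq ι] [CommRing R] (a : ι → R) :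
    ∑ j, ∑ l ∈ univ.erase j, a l * a j = (∑ j, a j) ^ 2 - ∑ j, a j ^ 2 := by
  simp_rw [sum_erase_eq_sub (mem_univ _), sq, sum_mul_sum, ← sum_sub_distrib, mul_comm]

theorem expectation_Z_V_general (m : ℕ) (μ : Fin m → ℝ≥0) (hμ : ∀ j, 0 < μ j) :
    ∫ x : Fin m → ℕ, (∑ j, (∏ k ∈ univ.erase j, (x k : ℝ)) - (∏ j, (μ j : ℝ)) * ∑ j, ((μ j : ℝ))⁻¹) * ((∏ j, (μ j : ℝ)) * ∑ j, ((μ j : ℝ))⁻¹ * ((x j : ℝ) - (μ j : ℝ))) ∂(poissonPi μ)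
      = (∏ j, (μ j : ℝ)) ^ 2 * ((∑ j, ((μ j : ℝ))⁻¹) ^ 2 - (∑ j, ((μ j : ℝ))⁻¹ ^ 2)) := by
  set P := ∏ j, (μ j : ℝ)
  have hprod_erase (j : Fin m) : ∏ k ∈ univ.erase j, (μ k : ℝ) = P * (μ j : ℝ)⁻¹ := by
    rw [eq_mul_inv_iff_mul_eq₀ (by exact_mod_cast (hμ j).ne'), mul_comm,
      mul_prod_erase univ (fun k ↦ (μ k : ℝ)) (mem_univ j)]
  have hterm (j l : Fin m) (c : ℝ) :=
    (integrable_poissonPi_prod_mul_cast_sub μ (univ.erase j) l).const_mul c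
  have hrow (j : Fin m) (c : Fin m → ℝ) := integrable_finsetSum univ fun l _ ↦ hterm j l (c l)
  have hcentred (l : Fin m) (c : ℝ) := (integrable_poissonPi_cast_sub μ l).const_mul c
  simp_rw [sum_sub_mul_mul_sum]
  rw [integral_sub (integrable_finsetSum _ fun j _ ↦ hrow j _)
      (integrable_finsetSum _ fun l _ ↦ hcentred l _),
    integral_finsetSum _ fun j _ ↦ hrow j _, integral_finsetSum _ fun l _ ↦ hcentred l _]
  simp_rw [integral_finsetSum _ fun l _ ↦ hterm _ l _, integral_const_mul,
    integral_poissonPi_prod_mul_cast_sub, integral_poissonPi_cast_sub, mul_zero, sum_const_zero,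
    sub_zero, mul_ite, mul_zero, sum_ite_mem, univ_inter, hprod_erase]
  rw [← sum_sum_erase_mul, mul_sum]
  simp_rw [mul_sum]
  refine sum_congr rfl fun _ _ ↦ sum_congr rfl fun _ _ ↦ ?_
  ring

theorem expectation_Z_V (m : ℕ) (hm : 2 ≤ m) (μ : Fin m → ℝ≥0) (hμ : ∀ j, 0 < μ j) :
    ∫ x : Fin m → ℕ, (∑ j, (∏ k ∈ univ.erase j, (x k : ℝ)) - (∏ j, (μ j : ℝ)) * ∑ j, ((μ j : ℝ))⁻¹) * ((∏ j, (μ j : ℝ)) * ∑ j, ((μ j : ℝ))⁻¹ * ((x j : ℝ) - (μ j : ℝ))) ∂(poissonPi μ)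
      = (∏ j, (μ j : ℝ)) ^ 2 * ((∑ j, ((μ j : ℝ))⁻¹) ^ 2 - (∑ j, ((μ j : ℝ))⁻¹ ^ 2)) :=
  expectation_Z_V_general m μ hμ
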